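/- Let T be a stress-energy tensor on (N+1)-dimensional Minkowski space satisfying the dominant energy condition. Let V be a future-directed timelike vector normalized so that η(V,V) = -1, and let D be a (not necessarily symmetric) bilinear form on ℝ^{N+1} (identified with an (N+1)×(N+1) real matrix via D(x,y) = xᵀDy) with D(V,·) = 0 and D(·,V) = 0. Then the full contraction T^{μν}D_{μν} := ∑_{μ,ν}(ηTη)_{μν} D_{μν} satisfies |T^{μν}D_{μν}| ≤ N² · √(D_{αβ}D^{αβ}) · T(V,V), where D_{αβ}D^{αβ} := ∑_{α,β} D_{αβ}(ηDη)_{αβ} (this scalar is nonnegative because both contractions of D with the timelike vector V vanish). -/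

import Mathlib

open Matrix

/-- The Minkowski metric `diag(-1,1,…,1)` on `ℝ^{N+1}`. -/
noncomputable def eta (N : ℕ) : Matrix (Fin (N+1)) (Fin (N+1)) ℝ :=
  Matrix.diagonal (fun i => if i = 0 then (-1 : ℝ) else 1)

/-- The Minkowski bilinear form `η(x,y) = -x₀y₀ + ∑ᵢ xᵢyᵢ`. -/
noncomputable def mdot {N : ℕ} (x y : Fin (N+1) → ℝ) : ℝ :=
  x ⬝ᵥ (eta N).mulVec y

/-- Future-directed timelike: `η(v,v) < 0` and `v₀ > 0`. -/
def FDTimelike {N : ℕ} (v : Fin (N+1) → ℝ) : Prop :=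
  mdot v v < 0 ∧ 0 < v 0

/-- Future-directed lightlike: `v ≠ 0`, `η(v,v) = 0` and `v₀ > 0`. -/
def FDLightlike {N : ℕ} (v : Fin (N+1) → ℝ) : Prop :=
  v ≠ 0 ∧ mdot v v = 0 ∧ 0 < v 0

/-- Future-directed causal: future-directed timelike or lightlike. -/
def FDCausal {N : ℕ} (v : Fin (N+1) → ℝ) : Prop :=
  FDTimelike v ∨ FDLightlike v

/-- The bilinear form associated to a matrix: `T(v,w) = vᵀ T w`. -/
noncomputable def Tbil {N : ℕ} (T : Matrix (Fin (N+1)) (Fin (N+1)) ℝ)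
    (v w : Fin (N+1) → ℝ) : ℝ :=
  v ⬝ᵥ T.mulVec w

/-- The endomorphism associated to a stress-energy tensor: `u(v) = -ηTv`. -/
noncomputable def endo {N : ℕ} (T : Matrix (Fin (N+1)) (Fin (N+1)) ℝ)
    (v : Fin (N+1) → ℝ) : Fin (N+1) → ℝ :=
  -((eta N).mulVec (T.mulVec v))

/-- The dominant energy condition: every future-directed causal vector is
sent by the associated endomorphism to a future-directed causal vector or zero. -/
def DEC {N : ℕ} (T : Matrix (Fin (N+1)) (Fin (N+1)) ℝ) : Prop :=
  ∀ v : Fin (N+1) → ℝ, FDCausal v → FDCausal (endo T v) ∨ endo T v = 0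

/-!
Boosting to the rest frame of `V` (the boost `Λ` is symmetric with `Λ η Λ = η` and `Λ e₀ = V`)
leaves both contractions unchanged, and there `D` lives on the spatial `N × N` block. On that
block DEC bounds every entry of `T` by `T(V,V)`: for unit `x, y ⊥ V` the vectors `V ± x`,
`V ± y` are future-directed null, so `T(V ± x, V ± y) ≥ 0`. Cauchy–Schwarz over the `N²`
spatial entries then gives the bound even with `N` in place of `N²`.
-/

lemma sum_conj_contraction_eq {n R : Type*} [Fintype n] [CommSemiring R] {G Λ : Matrix n n R} (h : Λ * G * Λᵀ = G) (A B : Matrix n n R) :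
    ∑ μ, ∑ ν, (G * (Λᵀ * A * Λ) * G) μ ν * (Λᵀ * B * Λ) μ ν =
      ∑ μ, ∑ ν, (G * A * G) μ ν * B μ ν := by
  show trace (G * (Λᵀ * A * Λ) * G * (Λᵀ * B * Λ)ᵀ) = trace (G * A * G * Bᵀ)
  calc trace (G * (Λᵀ * A * Λ) * G * (Λᵀ * B * Λ)ᵀ)
      = trace ((G * Λᵀ * A * Λ * G * Λᵀ * Bᵀ) * Λ) := by
        simp only [transpose_mul, transpose_transpose, Matrix.mul_assoc]
    _ = trace (Λ * G * Λᵀ * A * (Λ * G * Λᵀ) * Bᵀ) := by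
        rw [trace_mul_comm]
        simp only [Matrix.mul_assoc]
    _ = trace (G * A * G * Bᵀ) := by rw [h]

lemma abs_sum_mul_le_of_abs_le {ι : Type*} [Fintype ι] {f : ι → ℝ} {c : ℝ} (hf : ∀ i, |f i| ≤ c)
    (g : ι → ℝ) : |∑ i, f i * g i| ≤ c * √(Fintype.card ι) * √(∑ i, g i ^ 2) := by
  cases isEmpty_or_nonempty ι
  · simp
  have hc : 0 ≤ c := (abs_nonneg _).trans (hf (Classical.arbitrary ι))
  calc |∑ i, f i * g i| ≤ ∑ i, c * |g i| := by
        refine (Finset.abs_sum_le_sum_abs _ _).trans (Finset.sum_le_sum fun i _ ↦ ?_)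
        rw [abs_mul]
        exact mul_le_mul_of_nonneg_right (hf i) (abs_nonneg _)
    _ = c * ∑ i, 1 * |g i| := by simp [Finset.mul_sum]
    _ ≤ c * (√(∑ _i : ι, (1 : ℝ) ^ 2) * √(∑ i, |g i| ^ 2)) := by
        gcongr
        exact Real.sum_mul_le_sqrt_mul_sqrt _ _ _
    _ = c * √(Fintype.card ι) * √(∑ i, g i ^ 2) := by simp [mul_assoc]

section Minkowski

variable {N : ℕ}

lemma eta_transpose : (eta N)ᵀ = eta N := by
  simp [eta]

lemma eta_mul_eta : eta N * eta N = 1 := by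
  simp only [eta, diagonal_mul_diagonal, ← diagonal_one]
  congr 1
  ext i
  split_ifs <;> norm_num

lemma eta_mul_mul_eta_apply (M : Matrix (Fin (N+1)) (Fin (N+1)) ℝ) (μ ν : Fin (N+1)) :
    (eta N * M * eta N) μ ν =
      (if μ = 0 then -1 else 1) * M μ ν * (if ν = 0 then -1 else 1) := by
  simp [eta, mul_diagonal, diagonal_mul]

lemma mdot_comm (x y : Fin (N+1) → ℝ) : mdot x y = mdot y x := by
  rw [mdot, dotProduct_mulVec, ← mulVec_transpose, eta_transpose, dotProduct_comm, mdot]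

lemma mdot_eq_sum_succ (x y : Fin (N+1) → ℝ) :
    mdot x y = -(x 0 * y 0) + ∑ i : Fin N, x i.succ * y i.succ := by
  simp [mdot, eta, dotProduct, mulVec_diagonal, Fin.sum_univ_succ, Fin.succ_ne_zero]

lemma mdot_single_single (μ ν : Fin (N+1)) :
    mdot (Pi.single μ 1) (Pi.single ν 1) = eta N μ ν := by
  simp [mdot, mulVec_single]

lemma mdot_mulVec_mulVec {Λ : Matrix (Fin (N+1)) (Fin (N+1)) ℝ}
    (hΛ : Λᵀ * eta N * Λ = eta N) (x y : Fin (N+1) → ℝ) :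
    mdot (Λ *ᵥ x) (Λ *ᵥ y) = mdot x y := by
  conv_rhs => rw [mdot, ← hΛ, ← mulVec_mulVec, ← mulVec_mulVec, mulVec_transpose,
    dotProduct_comm, ← dotProduct_mulVec]
  rw [mdot, dotProduct_comm]

lemma mdot_add_left (x y z : Fin (N+1) → ℝ) : mdot (x + y) z = mdot x z + mdot y z := by
  simp [mdot, add_dotProduct]

lemma mdot_add_right (x y z : Fin (N+1) → ℝ) : mdot x (y + z) = mdot x y + mdot x z := by
  simp [mdot, mulVec_add, dotProduct_add]

lemma mdot_neg_left (x y : Fin (N+1) → ℝ) : mdot (-x) y = -mdot x y := by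
  simp [mdot]

lemma mdot_neg_right (x y : Fin (N+1) → ℝ) : mdot x (-y) = -mdot x y := by
  simp [mdot, mulVec_neg]

lemma FDCausal.pos_zero {v : Fin (N+1) → ℝ} (h : FDCausal v) : 0 < v 0 :=
  h.elim (·.2) (·.2.2)

lemma FDCausal.mdot_self_nonpos {v : Fin (N+1) → ℝ} (h : FDCausal v) : mdot v v ≤ 0 :=
  h.elim (·.1.le) (·.2.1.le)

lemma sq_sum_spatial_le {x y : Fin (N+1) → ℝ} (hx : mdot x x ≤ 0) (hy : mdot y y ≤ 0) :
    (∑ i : Fin N, x i.succ * y i.succ) ^ 2 ≤ (x 0 * y 0) ^ 2 := by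
  rw [mdot_eq_sum_succ] at hx hy
  calc (∑ i : Fin N, x i.succ * y i.succ) ^ 2
      ≤ (∑ i : Fin N, x i.succ ^ 2) * ∑ i : Fin N, y i.succ ^ 2 :=
        Finset.sum_mul_sq_le_sq_mul_sq _ _ _
    _ ≤ x 0 ^ 2 * y 0 ^ 2 := by
        simp only [sq] at *
        exact mul_le_mul (by linarith) (by linarith) (Finset.sum_nonneg fun i _ ↦ mul_self_nonneg _)
          (mul_self_nonneg _)
    _ = (x 0 * y 0) ^ 2 := by ring

lemma mdot_nonpos_of_fdCausal {x y : Fin (N+1) → ℝ} (hx : FDCausal x) (hy : FDCausal y) :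
    mdot x y ≤ 0 := by
  have hS := sq_sum_spatial_le hx.mdot_self_nonpos hy.mdot_self_nonpos
  have hxy := mul_pos hx.pos_zero hy.pos_zero
  rw [mdot_eq_sum_succ]
  nlinarith

lemma fdCausal_of_mdot_neg {V z : Fin (N+1) → ℝ} (hV : FDTimelike V) (hz : mdot z z ≤ 0)
    (hVz : mdot V z < 0) : FDCausal z := by
  have hz0 : 0 < z 0 := by
    by_contra! hz0
    have hS := sq_sum_spatial_le hV.1.le hz
    have hVz0 := mul_nonpos_of_nonneg_of_nonpos hV.2.le hz0
    rw [mdot_eq_sum_succ] at hVz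
    nlinarith
  rcases hz.lt_or_eq with hlt | heq
  · exact Or.inl ⟨hlt, hz0⟩
  · exact Or.inr ⟨fun h ↦ by simp [h] at hz0, heq, hz0⟩

lemma Tbil_eq_neg_mdot_endo (T : Matrix (Fin (N+1)) (Fin (N+1)) ℝ) (x y : Fin (N+1) → ℝ) :
    Tbil T x y = -mdot x (endo T y) := by
  rw [Tbil, endo, mdot, mulVec_neg, mulVec_mulVec, eta_mul_eta, one_mulVec, dotProduct_neg,
    neg_neg]

lemma Tbil_nonneg_of_DEC {T : Matrix (Fin (N+1)) (Fin (N+1)) ℝ} (hdec : DEC T)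
    {x y : Fin (N+1) → ℝ} (hx : FDCausal x) (hy : FDCausal y) : 0 ≤ Tbil T x y := by
  rw [Tbil_eq_neg_mdot_endo, neg_nonneg]
  rcases hdec y hy with h | h
  · exact mdot_nonpos_of_fdCausal hx h
  · simp [h, mdot]

lemma fdCausal_add_of_orthonormal {V x : Fin (N+1) → ℝ} (hV : FDTimelike V)
    (hVV : mdot V V = -1) (hVx : mdot V x = 0) (hxx : mdot x x = 1) : FDCausal (V + x) := by
  refine fdCausal_of_mdot_neg hV ?_ ?_
  · simp only [mdot_add_left, mdot_add_right, mdot_comm x V, hVV, hVx, hxx]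
    norm_num
  · simp only [mdot_add_right, hVV, hVx]
    norm_num

lemma abs_Tbil_le_of_orthonormal {T : Matrix (Fin (N+1)) (Fin (N+1)) ℝ} (hdec : DEC T)
    {V x y : Fin (N+1) → ℝ} (hV : FDTimelike V) (hVV : mdot V V = -1)
    (hVx : mdot V x = 0) (hxx : mdot x x = 1) (hVy : mdot V y = 0) (hyy : mdot y y = 1) :
    |Tbil T x y| ≤ Tbil T V V := by
  have causal : ∀ z, mdot V z = 0 → mdot z z = 1 → FDCausal (V + z) ∧ FDCausal (V + -z) :=
    fun z hVz hzz ↦ ⟨fdCausal_add_of_orthonormal hV hVV hVz hzz,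
      fdCausal_add_of_orthonormal hV hVV (by rw [mdot_neg_right, hVz, neg_zero])
        (by rw [mdot_neg_left, mdot_neg_right, neg_neg, hzz])⟩
  obtain ⟨hxp, hxm⟩ := causal x hVx hxx
  obtain ⟨hyp, hym⟩ := causal y hVy hyy
  have hpp := Tbil_nonneg_of_DEC hdec hxp hyp
  have hpm := Tbil_nonneg_of_DEC hdec hxp hym
  have hmp := Tbil_nonneg_of_DEC hdec hxm hyp
  have hmm := Tbil_nonneg_of_DEC hdec hxm hym
  simp only [Tbil, mulVec_add, mulVec_neg, dotProduct_add, add_dotProduct, dotProduct_neg,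
    neg_dotProduct] at hpp hpm hmp hmm ⊢
  rw [abs_le]
  constructor <;> linarith

lemma vecMulVec_mul_eta_mul_vecMulVec (w : Fin (N+1) → ℝ) :
    vecMulVec w w * eta N * vecMulVec w w = mdot w w • vecMulVec w w := by
  rw [vecMulVec_mul, vecMulVec_mul_vecMulVec, ← dotProduct_mulVec, vecMulVec_smul]
  rfl

/-- The standard boost `[[γ, pᵀ], [p, 1 + p pᵀ / (1 + γ)]]` for `V = (γ, p)`. -/
noncomputable def boost (V : Fin (N+1) → ℝ) : Matrix (Fin (N+1)) (Fin (N+1)) ℝ :=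
  eta N + (1 + V 0)⁻¹ • vecMulVec (Pi.single 0 1 + V) (Pi.single 0 1 + V)

lemma boost_transpose (V : Fin (N+1) → ℝ) : (boost V)ᵀ = boost V := by
  simp [boost, eta_transpose]

lemma boost_mulVec_single_zero {V : Fin (N+1) → ℝ} (hV : 1 + V 0 ≠ 0) :
    boost V *ᵥ Pi.single 0 1 = V := by
  have hη : eta N *ᵥ Pi.single 0 1 = -Pi.single 0 1 := by
    simp [eta, ← Pi.single_neg]
  have hw : (Pi.single 0 1 + V) ⬝ᵥ Pi.single 0 1 = 1 + V 0 := by simp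
  rw [boost, add_mulVec, smul_mulVec, vecMulVec_mulVec, hw, hη, op_smul_eq_smul,
    smul_smul, inv_mul_cancel₀ hV, one_smul]
  abel

lemma boost_mul_eta_mul_boost {V : Fin (N+1) → ℝ} (hVV : mdot V V = -1) (hV : 1 + V 0 ≠ 0) :
    boost V * eta N * boost V = eta N := by
  set w : Fin (N+1) → ℝ := Pi.single 0 1 + V
  have hww : mdot w w = -2 * (1 + V 0) := by
    have h0 : mdot (Pi.single 0 1) V = -V 0 := by simp [mdot, eta, mulVec_diagonal]
    simp only [w, mdot_add_left, mdot_add_right, mdot_comm V, h0, hVV, mdot_single_single]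
    simp [eta]
    ring
  set c := (1 + V 0)⁻¹
  set W := vecMulVec w w
  calc boost V * eta N * boost V = (eta N + c • W) * eta N * (eta N + c • W) := rfl
    _ = eta N * eta N * eta N + c • (eta N * eta N * W) + c • (W * eta N * eta N)
          + (c * c) • (W * eta N * W) := by
        simp only [add_mul, mul_add, Matrix.smul_mul, Matrix.mul_smul, smul_smul]
        abel
    _ = eta N + (2 * c + c * c * mdot w w) • W := by
        rw [eta_mul_eta, Matrix.one_mul, Matrix.one_mul, Matrix.mul_assoc W, eta_mul_eta,
          Matrix.mul_one, show W * eta N * W = mdot w w • W from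
            vecMulVec_mul_eta_mul_vecMulVec w, smul_smul]
        module
    _ = eta N := by
        rw [hww, show 2 * c + c * c * (-2 * (1 + V 0)) = 2 * c * (1 - c * (1 + V 0)) by ring,
          inv_mul_cancel₀ hV, sub_self, mul_zero, zero_smul, add_zero]

lemma transpose_mul_mul_apply (Λ M : Matrix (Fin (N+1)) (Fin (N+1)) ℝ) (μ ν : Fin (N+1)) :
    (Λᵀ * M * Λ) μ ν = Tbil M (Λ *ᵥ Pi.single μ 1) (Λ *ᵥ Pi.single ν 1) := by
  rw [Tbil, mulVec_mulVec, mulVec_single_one, mulVec_single_one, Matrix.mul_assoc, mul_apply']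
  rfl

lemma sum_eta_contraction_eq_sum_succ {A M : Matrix (Fin (N+1)) (Fin (N+1)) ℝ}
    (hrow : ∀ ν, M 0 ν = 0) (hcol : ∀ μ, M μ 0 = 0) :
    ∑ μ, ∑ ν, (eta N * A * eta N) μ ν * M μ ν =
      ∑ i : Fin N, ∑ j : Fin N, A i.succ j.succ * M i.succ j.succ := by
  simp [Fin.sum_univ_succ, hrow, hcol, eta_mul_mul_eta_apply, Fin.succ_ne_zero]

lemma abs_conj_apply_succ_le {T Λ : Matrix (Fin (N+1)) (Fin (N+1)) ℝ} (hdec : DEC T)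
    {V : Fin (N+1) → ℝ} (hV : FDTimelike V) (hVV : mdot V V = -1)
    (hΛ : Λᵀ * eta N * Λ = eta N) (hΛV : Λ *ᵥ Pi.single 0 1 = V) (i j : Fin N) :
    |(Λᵀ * T * Λ) i.succ j.succ| ≤ Tbil T V V := by
  have horth (μ ν : Fin (N+1)) :
      mdot (Λ *ᵥ Pi.single μ 1) (Λ *ᵥ Pi.single ν 1) = eta N μ ν := by
    rw [mdot_mulVec_mulVec hΛ, mdot_single_single]
  subst hΛV
  rw [transpose_mul_mul_apply]
  refine abs_Tbil_le_of_orthonormal hdec hV hVV ?_ ?_ ?_ ?_ <;>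
    rw [horth] <;> simp [eta, Fin.succ_ne_zero, (Fin.succ_ne_zero _).symm]

end Minkowski

theorem dec_ineq_three_general {N : ℕ}
    (T : Matrix (Fin (N+1)) (Fin (N+1)) ℝ)
    (hdec : DEC T)
    (V : Fin (N+1) → ℝ) (hV : FDTimelike V) (hVnorm : mdot V V = -1)
    (D : Matrix (Fin (N+1)) (Fin (N+1)) ℝ)
    (hD1 : ∀ y : Fin (N+1) → ℝ, V ⬝ᵥ D.mulVec y = 0)
    (hD2 : ∀ x : Fin (N+1) → ℝ, x ⬝ᵥ D.mulVec V = 0) :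
    |∑ μ, ∑ ν, (eta N * T * eta N) μ ν * D μ ν| ≤
      (N : ℝ)^2 * Real.sqrt (∑ α, ∑ β, D α β * (eta N * D * eta N) α β) *
        Tbil T V V := by
  have hV0 : 1 + V 0 ≠ 0 := (add_pos one_pos hV.2).ne'
  set Λ := boost V
  have hΛ : Λᵀ * eta N * Λ = eta N := by
    rw [boost_transpose]; exact boost_mul_eta_mul_boost hVnorm hV0
  have hΛ' : Λ * eta N * Λᵀ = eta N := by
    rw [boost_transpose]; exact boost_mul_eta_mul_boost hVnorm hV0
  have hΛV : Λ *ᵥ Pi.single 0 1 = V := boost_mulVec_single_zero hV0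
  have hrow (ν) : (Λᵀ * D * Λ) 0 ν = 0 := by rw [transpose_mul_mul_apply, hΛV]; exact hD1 _
  have hcol (μ) : (Λᵀ * D * Λ) μ 0 = 0 := by rw [transpose_mul_mul_apply, hΛV]; exact hD2 _
  -- write `D_{αβ} D^{αβ}` as `∑ (ηDη)_{αβ} D_{αβ}`, the shape of the first contraction
  simp_rw [mul_comm (D _ _)]
  rw [← sum_conj_contraction_eq hΛ' T D, ← sum_conj_contraction_eq hΛ' D D,
    sum_eta_contraction_eq_sum_succ hrow hcol, sum_eta_contraction_eq_sum_succ hrow hcol]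
  have hc : 0 ≤ Tbil T V V := Tbil_nonneg_of_DEC hdec (Or.inl hV) (Or.inl hV)
  have hN : (N : ℝ) ≤ N ^ 2 := by exact_mod_cast Nat.le_self_pow two_ne_zero N
  calc _ ≤ Tbil T V V * N *
        √(∑ i : Fin N, ∑ j : Fin N, (Λᵀ * D * Λ) i.succ j.succ * (Λᵀ * D * Λ) i.succ j.succ) := by
        simpa [Fintype.sum_prod_type, sq] using abs_sum_mul_le_of_abs_le
          (fun p : Fin N × Fin N ↦ abs_conj_apply_succ_le hdec hV hVnorm hΛ hΛV p.1 p.2)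
          (fun p ↦ (Λᵀ * D * Λ) p.1.succ p.2.succ)
    _ ≤ _ := by
        rw [mul_comm (Tbil T V V), mul_right_comm]
        gcongr

/-- Inequality (3): `|T^{μν} D_{μν}| ≤ N² √(D_{αβ}D^{αβ}) T(V,V)` for a
bilinear form `D` whose contractions with the unit timelike `V` vanish. -/
theorem dec_ineq_three {N : ℕ} (hN : 1 ≤ N)
    (T : Matrix (Fin (N+1)) (Fin (N+1)) ℝ) (hsymm : T.IsSymm)
    (hdec : DEC T)
    (V : Fin (N+1) → ℝ) (hV : FDTimelike V) (hVnorm : mdot V V = -1)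
    (D : Matrix (Fin (N+1)) (Fin (N+1)) ℝ)
    (hD1 : ∀ y : Fin (N+1) → ℝ, V ⬝ᵥ D.mulVec y = 0)
    (hD2 : ∀ x : Fin (N+1) → ℝ, x ⬝ᵥ D.mulVec V = 0) :
    |∑ μ, ∑ ν, (eta N * T * eta N) μ ν * D μ ν| ≤
      (N : ℝ)^2 * Real.sqrt (∑ α, ∑ β, D α β * (eta N * D * eta N) α β) *
        Tbil T V V :=
  dec_ineq_three_general T hdec V hV hVnorm D hD1 hD2
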